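/- The N/2 two-sample shifts {ψ1[·−2l] : l = 0,…,N/2−1} of the first-level discrete-spline wavelet packet ψ1 of order 2r form an orthonormal system in Π[N]; moreover every shift ψ1[·−2l] is orthogonal to every shift ψ0[·−2p], so that the combined family {ψ0[·−2l]} ∪ {ψ1[·−2l]}, l = 0,…,N/2−1, is an orthonormal basis of the N-dimensional space Π[N]. -/

import Mathlib

open Finset

noncomputable def omegaN (N : ℕ) : ℂ := Complex.exp (2 * Real.pi * Complex.I / N)

noncomputable def U4r (N r : ℕ) (n : ℤ) : ℝ :=
  ((Real.cos (Real.pi * n / N)) ^ (4 * r) + (Real.sin (Real.pi * n / N)) ^ (4 * r)) / 2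

noncomputable def betaF (N r : ℕ) (n : ℤ) : ℂ :=
  Complex.ofReal ((Real.cos (Real.pi * n / N)) ^ (2 * r) / Real.sqrt (U4r N r n))

noncomputable def alphaF (N r : ℕ) (n : ℤ) : ℂ :=
  omegaN N ^ n * Complex.ofReal ((Real.sin (Real.pi * n / N)) ^ (2 * r) / Real.sqrt (U4r N r n))

noncomputable def psi0 (N r : ℕ) (k : ℤ) : ℂ :=
  (N : ℂ)⁻¹ * ∑ n ∈ Finset.range N, omegaN N ^ (k * (n : ℤ)) * betaF N r n

noncomputable def psi1 (N r : ℕ) (k : ℤ) : ℂ :=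
  (N : ℂ)⁻¹ * ∑ n ∈ Finset.range N, omegaN N ^ (k * (n : ℤ)) * alphaF N r n

noncomputable def ip (N : ℕ) (x y : ℤ → ℂ) : ℂ :=
  ∑ k ∈ Finset.range N, x k * (starRingEnd ℂ) (y k)

/-!
Both packets are inverse DFTs of their spectra: `ψ₀ = idft β` and `ψ₁ = idft α`. By Plancherel the
inner product of the two-sample shifts `idft f (· - 2l)` and `idft g (· - 2p)` is
`N⁻¹ ∑ₙ f[n] g̅[n] ω^(2(p-l)n)`; since `ω^(2 · N/2) = 1`, folding `n` with `n + N/2` turns it into a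
length-`N/2` DFT of `f[n] g̅[n] + f[n+N/2] g̅[n+N/2]`, which is `c/2 · δ_{lp}` when that polyphase
product is a constant `c`. The half-period shift swaps `cos` and `sin` and `ω^(N/2) = -1`, so
`β[n+N/2] = sinWeight` and `α[n+N/2] = -ωⁿ cosWeight`; together with `cos^4r + sin^4r = 2U^4r` this
makes the modulation matrix `(β[n] β[n+N/2]; α[n] α[n+N/2])` equal to `√2` times a unitary matrix.
Its rows give the orthonormality statements; its columns, through Parseval on `ℤ/(N/2)` and DFT
inversion, give the reconstruction formula.
-/

open Real

variable {N M : ℕ}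

lemma omegaN_ne_zero : omegaN N ≠ 0 := Complex.exp_ne_zero _

lemma isPrimitiveRoot_omegaN (hN : N ≠ 0) : IsPrimitiveRoot (omegaN N) N :=
  Complex.isPrimitiveRoot_exp N hN

lemma conj_omegaN_zpow (s : ℤ) : starRingEnd ℂ (omegaN N ^ s) = omegaN N ^ (-s) := by
  rw [map_zpow₀, zpow_neg, ← inv_zpow, omegaN, ← Complex.exp_conj, ← Complex.exp_neg]
  congr 2
  simp only [map_div₀, map_mul, map_ofNat, Complex.conj_ofReal, Complex.conj_I, mul_neg,
    map_natCast]
  ring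

lemma omegaN_two_mul_zpow (hNM : N = 2 * M) (d : ℤ) : omegaN N ^ (2 * d) = omegaN M ^ d := by
  rw [zpow_mul, omegaN, omegaN, zpow_two, ← Complex.exp_add, hNM]
  push_cast
  ring_nf

lemma omegaN_zpow_add_half (hNM : N = 2 * M) (hM : M ≠ 0) (n : ℤ) :
    omegaN N ^ (n + M) = -omegaN N ^ n := by
  have h : IsPrimitiveRoot (omegaN N ^ M) 2 := by
    simpa [hNM, hM] using (isPrimitiveRoot_omegaN (N := N) (by omega)).pow_of_dvd hM ⟨2, by omega⟩
  rw [zpow_add₀ omegaN_ne_zero, zpow_natCast, h.eq_neg_one_of_two_right, mul_neg_one]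

lemma omegaN_zpow_natCast_mul (hN : N ≠ 0) (d : ℤ) : omegaN N ^ ((N : ℤ) * d) = 1 :=
  ((isPrimitiveRoot_omegaN hN).zpow_eq_one_iff_dvd _).2 (dvd_mul_right _ _)

lemma sum_range_omegaN_zpow_sub_mul {n m : ℕ} (hn : n < N) (hm : m < N) :
    ∑ k ∈ range N, omegaN N ^ (((n : ℤ) - m) * k) = if n = m then (N : ℂ) else 0 := by
  have hζ := isPrimitiveRoot_omegaN (N := N) (by omega)
  split_ifs with h
  · simp [h]
  have hne : omegaN N ^ ((n : ℤ) - m) ≠ 1 := by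
    rw [Ne, hζ.zpow_eq_one_iff_dvd]
    intro hdvd
    have := Int.eq_zero_of_abs_lt_dvd hdvd (by rw [abs_sub_lt_iff]; omega)
    omega
  have hpow : (omegaN N ^ ((n : ℤ) - m)) ^ N = 1 := by
    rw [← zpow_natCast, ← zpow_mul, mul_comm, omegaN_zpow_natCast_mul (by omega)]
  simp_rw [zpow_mul, zpow_natCast]
  rw [geom_sum_eq hne, hpow, sub_self, zero_div]

lemma sum_omegaN_mul_sum_omegaN_neg (u v : ℕ → ℂ) :
    ∑ k ∈ range N, (∑ n ∈ range N, u n * omegaN N ^ ((k : ℤ) * n)) *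
        (∑ m ∈ range N, v m * omegaN N ^ (-(k : ℤ) * m)) =
      N * ∑ n ∈ range N, u n * v n := by
  have horth (n m : ℕ) (hn : n ∈ range N) (hm : m ∈ range N) :
      ∑ k ∈ range N, u n * v m * omegaN N ^ (((n : ℤ) - m) * k) =
        if n = m then N * (u n * v n) else 0 := by
    rw [← mul_sum, sum_range_omegaN_zpow_sub_mul (mem_range.1 hn) (mem_range.1 hm)]
    split_ifs with h <;> simp [h, mul_comm]
  calc _ = ∑ n ∈ range N, ∑ m ∈ range N, ∑ k ∈ range N,
        u n * v m * omegaN N ^ (((n : ℤ) - m) * k) := by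
        simp_rw [sum_mul_sum]
        rw [sum_comm]
        refine sum_congr rfl fun n _ => ?_
        rw [sum_comm]
        refine sum_congr rfl fun m _ => sum_congr rfl fun k _ => ?_
        rw [mul_mul_mul_comm, ← zpow_add₀ omegaN_ne_zero]
        ring_nf
    _ = _ := by
        rw [mul_sum]
        refine sum_congr rfl fun n hn => ?_
        rw [sum_congr rfl (horth n · hn), sum_ite_eq (range N) n, if_pos hn]

variable (N) in
noncomputable def idft (f : ℤ → ℂ) (k : ℤ) : ℂ :=
  (N : ℂ)⁻¹ * ∑ n ∈ range N, omegaN N ^ (k * n) * f n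

variable (N) in
noncomputable def dft (x : ℤ → ℂ) (n : ℤ) : ℂ :=
  ∑ t ∈ range N, x t * omegaN N ^ (-(t * n))

lemma idft_sub (f : ℤ → ℂ) (a k : ℤ) :
    idft N f (k - a) = idft N (fun n => omegaN N ^ (-a * n) * f n) k := by
  simp only [idft, ← mul_assoc, ← zpow_add₀ omegaN_ne_zero]
  ring_nf

lemma ip_idft_idft (f g : ℤ → ℂ) :
    ip N (idft N f) (idft N g) = (N : ℂ)⁻¹ * ∑ n ∈ range N, f n * starRingEnd ℂ (g n) := by
  rcases eq_or_ne N 0 with rfl | hN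
  · simp [ip]
  have hconj (k : ℤ) : starRingEnd ℂ (idft N g k) =
      (N : ℂ)⁻¹ * ∑ m ∈ range N, starRingEnd ℂ (g m) * omegaN N ^ (-k * m) := by
    simp only [idft, map_mul, map_inv₀, map_natCast, map_sum, conj_omegaN_zpow]
    congr 1
    exact sum_congr rfl fun m _ => by rw [neg_mul, mul_comm]
  simp only [ip, hconj]
  unfold idft
  simp_rw [mul_comm (omegaN N ^ (_ : ℤ)) (f _), mul_mul_mul_comm, ← mul_sum,
    sum_omegaN_mul_sum_omegaN_neg]
  field_simp

lemma ip_idft (x f : ℤ → ℂ) :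
    ip N x (idft N f) = (N : ℂ)⁻¹ * ∑ n ∈ range N, dft N x n * starRingEnd ℂ (f n) := by
  simp only [ip, idft, dft, map_mul, map_inv₀, map_natCast, map_sum, conj_omegaN_zpow,
    mul_sum, sum_mul]
  rw [sum_comm]
  refine sum_congr rfl fun n _ => sum_congr rfl fun t _ => ?_
  ring_nf

lemma idft_dft (hN : N ≠ 0) {x : ℤ → ℂ} (hx : Function.Periodic x N) (k : ℤ) :
    idft N (dft N x) k = x k := by
  obtain ⟨q, m, hm, rfl⟩ : ∃ (q : ℤ) (m : ℕ), m < N ∧ k = m + q * N := by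
    have h0 := Int.emod_nonneg k (by omega : (N : ℤ) ≠ 0)
    have h1 := Int.emod_lt_of_pos k (by omega : (0 : ℤ) < N)
    have h2 := Int.ediv_mul_add_emod k N
    exact ⟨k / N, (k % N).toNat, by omega, by omega⟩
  have hper : idft N (dft N x) (m + q * N) = idft N (dft N x) m := by
    simp only [idft]
    congr 1
    refine sum_congr rfl fun n _ => ?_
    rw [show ((m : ℤ) + q * N) * n = m * n + N * (q * n) by ring, zpow_add₀ omegaN_ne_zero,
      omegaN_zpow_natCast_mul hN, mul_one]
  have hdelta (t : ℕ) (ht : t ∈ range N) :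
      ∑ n ∈ range N, x t * omegaN N ^ (((m : ℤ) - t) * n) = if m = t then N * x m else 0 := by
    rw [← mul_sum, sum_range_omegaN_zpow_sub_mul hm (mem_range.1 ht)]
    split_ifs with h <;> simp [h, mul_comm]
  rw [hper, show x (m + q * N) = x m by simpa using hx.int_mul q m]
  calc idft N (dft N x) m = (N : ℂ)⁻¹ * ∑ t ∈ range N, ∑ n ∈ range N,
        x t * omegaN N ^ (((m : ℤ) - t) * n) := by
        unfold idft dft
        congr 1
        simp_rw [mul_sum]
        rw [sum_comm]
        refine sum_congr rfl fun t _ => sum_congr rfl fun n _ => ?_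
        rw [mul_left_comm, ← zpow_add₀ omegaN_ne_zero]
        ring_nf
    _ = x m := by
        rw [sum_congr rfl hdelta, sum_ite_eq (range N) m, if_pos (mem_range.2 hm)]
        field_simp

lemma sum_range_two_mul (F : ℤ → ℂ) :
    ∑ n ∈ range (2 * M), F n = ∑ n ∈ range M, (F n + F (n + M)) := by
  rw [two_mul, sum_range_add, ← sum_add_distrib]
  push_cast
  simp_rw [add_comm (M : ℤ)]

lemma sum_range_mul_omegaN_two_mul_zpow (hNM : N = 2 * M) (F : ℤ → ℂ) (d : ℤ) :
    ∑ n ∈ range N, F n * omegaN N ^ (2 * d * n) =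
      ∑ n ∈ range M, (F n + F (n + M)) * omegaN M ^ (d * n) := by
  subst hNM
  rw [sum_range_two_mul fun n => F n * omegaN (2 * M) ^ (2 * d * n)]
  refine sum_congr rfl fun n hn => ?_
  have hM : M ≠ 0 := by have := mem_range.1 hn; omega
  simp only [mul_assoc (2 : ℤ), omegaN_two_mul_zpow rfl]
  rw [show d * ((n : ℤ) + M) = M * d + d * n by ring, zpow_add₀ omegaN_ne_zero,
    omegaN_zpow_natCast_mul hM, one_mul, add_mul]

lemma ip_idft_sub_two_mul_eq_ite (hNM : N = 2 * M) {f g : ℤ → ℂ} {c : ℂ}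
    (hfg : ∀ n : ℤ, f n * starRingEnd ℂ (g n) + f (n + M) * starRingEnd ℂ (g (n + M)) = c)
    {l p : ℕ} (hl : l < M) (hp : p < M) :
    ip N (fun k => idft N f (k - 2 * l)) (fun k => idft N g (k - 2 * p)) =
      if l = p then c / 2 else 0 := by
  have hmod (n : ℤ) : omegaN N ^ (-(2 * l) * n) * f n *
      starRingEnd ℂ (omegaN N ^ (-(2 * p) * n) * g n) =
        f n * starRingEnd ℂ (g n) * omegaN N ^ (2 * ((p : ℤ) - l) * n) := by
    rw [map_mul, conj_omegaN_zpow, mul_mul_mul_comm, ← zpow_add₀ omegaN_ne_zero]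
    ring_nf
  simp only [idft_sub]
  rw [ip_idft_idft, sum_congr rfl fun (n : ℕ) _ => hmod n,
    sum_range_mul_omegaN_two_mul_zpow hNM fun n => f n * starRingEnd ℂ (g n)]
  simp only [hfg]
  rw [← mul_sum, sum_range_omegaN_zpow_sub_mul hp hl, hNM]
  rcases eq_or_ne l p with rfl | h
  · have hM : (M : ℂ) ≠ 0 := by norm_cast; omega
    simp only [Nat.cast_mul, Nat.cast_ofNat, mul_inv_rev, ↓reduceIte]
    field_simp
  · simp [h, h.symm]

lemma ip_idft_sub_two_mul (hNM : N = 2 * M) (x h : ℤ → ℂ) (l : ℤ) :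
    ip N x (fun t => idft N h (t - 2 * l)) = (N : ℂ)⁻¹ * ∑ n ∈ range M,
      (dft N x n * starRingEnd ℂ (h n) + dft N x (n + M) * starRingEnd ℂ (h (n + M))) *
        omegaN M ^ (l * n) := by
  simp only [idft_sub, ip_idft, map_mul, conj_omegaN_zpow]
  rw [← sum_range_mul_omegaN_two_mul_zpow hNM fun n => dft N x n * starRingEnd ℂ (h n)]
  congr 1
  exact sum_congr rfl fun n _ => by ring_nf

lemma idft_sub_two_mul (hNM : N = 2 * M) (h : ℤ → ℂ) (k l : ℤ) :
    idft N h (k - 2 * l) = (N : ℂ)⁻¹ * ∑ n ∈ range M,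
      (omegaN N ^ (k * n) * h n + omegaN N ^ (k * (n + M)) * h (n + M)) *
        omegaN M ^ (-l * n) := by
  rw [idft, ← sum_range_mul_omegaN_two_mul_zpow hNM fun n => omegaN N ^ (k * n) * h n]
  congr 1
  refine sum_congr rfl fun n _ => ?_
  rw [mul_right_comm, ← zpow_add₀ omegaN_ne_zero]
  ring_nf

lemma sum_ip_mul_idft_sub_two_mul (hNM : N = 2 * M) (hM : M ≠ 0) {f g : ℤ → ℂ}
    (hdiag : ∀ n : ℤ, starRingEnd ℂ (f n) * f n + starRingEnd ℂ (g n) * g n = 2)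
    (hoff : ∀ n : ℤ, starRingEnd ℂ (f n) * f (n + M) + starRingEnd ℂ (g n) * g (n + M) = 0)
    {x : ℤ → ℂ} (hx : Function.Periodic x N) (k : ℤ) :
    ∑ l ∈ range M, (ip N x (fun t => idft N f (t - 2 * l)) * idft N f (k - 2 * l) +
      ip N x (fun t => idft N g (t - 2 * l)) * idft N g (k - 2 * l)) = x k := by
  simp only [ip_idft_sub_two_mul hNM]
  simp only [idft_sub_two_mul hNM]
  set X := dft N x
  have hpair (n : ℤ) :
      (X n * starRingEnd ℂ (f n) + X (n + M) * starRingEnd ℂ (f (n + M))) *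
          (omegaN N ^ (k * n) * f n + omegaN N ^ (k * (n + M)) * f (n + M)) +
        (X n * starRingEnd ℂ (g n) + X (n + M) * starRingEnd ℂ (g (n + M))) *
          (omegaN N ^ (k * n) * g n + omegaN N ^ (k * (n + M)) * g (n + M)) =
        2 * (X n * omegaN N ^ (k * n) + X (n + M) * omegaN N ^ (k * (n + M))) := by
    have hoff' := congrArg (starRingEnd ℂ) (hoff n)
    simp only [map_add, map_mul, Complex.conj_conj, map_zero] at hoff'
    linear_combination X n * omegaN N ^ (k * n) * hdiag n +
      X n * omegaN N ^ (k * (n + M)) * hoff n +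
      X (n + M) * omegaN N ^ (k * n) * hoff' +
      X (n + M) * omegaN N ^ (k * (n + M)) * hdiag (n + M)
  calc _ = (N : ℂ)⁻¹ * (N : ℂ)⁻¹ * (M * ∑ n ∈ range M,
        2 * (X n * omegaN N ^ (k * n) + X (n + M) * omegaN N ^ (k * (n + M)))) := by
        conv_lhs =>
          simp only [mul_mul_mul_comm ((N : ℂ)⁻¹), ← mul_add, ← mul_sum, sum_add_distrib]
          simp only [sum_omegaN_mul_sum_omegaN_neg]
          rw [← mul_add, ← sum_add_distrib]
          simp only [hpair]
    _ = idft N X k := by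
        rw [idft, hNM, sum_range_two_mul fun n => omegaN (2 * M) ^ (k * n) * X n]
        simp_rw [mul_comm (omegaN (2 * M) ^ (_ : ℤ)) (X _), ← mul_sum]
        push_cast
        field_simp
    _ = x k := idft_dft (by omega) hx k

noncomputable def cosWeight (r : ℕ) (θ : ℝ) : ℝ :=
  cos θ ^ (2 * r) / √((cos θ ^ (4 * r) + sin θ ^ (4 * r)) / 2)

noncomputable def sinWeight (r : ℕ) (θ : ℝ) : ℝ :=
  sin θ ^ (2 * r) / √((cos θ ^ (4 * r) + sin θ ^ (4 * r)) / 2)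

lemma cos_pow_add_sin_pow_pos {m : ℕ} (hm : Even m) (θ : ℝ) : 0 < cos θ ^ m + sin θ ^ m := by
  rcases eq_or_ne (cos θ) 0 with h | h
  · have hs : sin θ ≠ 0 := fun hs => by simpa [h, hs] using sin_sq_add_cos_sq θ
    exact add_pos_of_nonneg_of_pos (hm.pow_nonneg _) (hm.pow_pos hs)
  · exact add_pos_of_pos_of_nonneg (hm.pow_pos h) (hm.pow_nonneg _)

lemma cosWeight_sq_add_sinWeight_sq (r : ℕ) (θ : ℝ) :
    (cosWeight r θ : ℂ) ^ 2 + (sinWeight r θ : ℂ) ^ 2 = 2 := by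
  have hpos := cos_pow_add_sin_pow_pos (m := 4 * r) ⟨2 * r, by ring⟩ θ
  norm_cast
  rw [cosWeight, sinWeight, div_pow, div_pow, Real.sq_sqrt (by positivity), ← pow_mul,
    ← pow_mul, show 2 * r * 2 = 4 * r by ring]
  field_simp

lemma cosWeight_add_pi_div_two (r : ℕ) (θ : ℝ) : cosWeight r (θ + π / 2) = sinWeight r θ := by
  have h4 : Even (4 * r) := ⟨2 * r, by ring⟩
  simp [cosWeight, sinWeight, cos_add_pi_div_two, sin_add_pi_div_two, h4.neg_pow, add_comm]

lemma sinWeight_add_pi_div_two (r : ℕ) (θ : ℝ) : sinWeight r (θ + π / 2) = cosWeight r θ := by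
  have h4 : Even (4 * r) := ⟨2 * r, by ring⟩
  simp [cosWeight, sinWeight, cos_add_pi_div_two, sin_add_pi_div_two, h4.neg_pow, add_comm]

lemma betaF_eq (N r : ℕ) (n : ℤ) : betaF N r n = cosWeight r (π * n / N) := rfl

lemma alphaF_eq (N r : ℕ) (n : ℤ) : alphaF N r n = omegaN N ^ n * sinWeight r (π * n / N) := rfl

lemma pi_mul_add_half_div (hNM : N = 2 * M) (hM : M ≠ 0) (n : ℤ) :
    π * ((n + M : ℤ) : ℝ) / N = π * n / N + π / 2 := by
  subst hNM
  push_cast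
  field_simp

lemma betaF_add_half (hNM : N = 2 * M) (hM : M ≠ 0) (r : ℕ) (n : ℤ) :
    betaF N r (n + M) = sinWeight r (π * n / N) := by
  rw [betaF_eq, pi_mul_add_half_div hNM hM, cosWeight_add_pi_div_two]

lemma alphaF_add_half (hNM : N = 2 * M) (hM : M ≠ 0) (r : ℕ) (n : ℤ) :
    alphaF N r (n + M) = -omegaN N ^ n * cosWeight r (π * n / N) := by
  rw [alphaF_eq, pi_mul_add_half_div hNM hM, sinWeight_add_pi_div_two,
    omegaN_zpow_add_half hNM hM]

lemma conj_omegaN_zpow_mul_self (n : ℤ) : starRingEnd ℂ (omegaN N ^ n) * omegaN N ^ n = 1 := by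
  rw [conj_omegaN_zpow, ← zpow_add₀ omegaN_ne_zero, neg_add_cancel, zpow_zero]

lemma conj_betaF_mul_add_conj_alphaF_mul (N r : ℕ) (n : ℤ) :
    starRingEnd ℂ (betaF N r n) * betaF N r n +
      starRingEnd ℂ (alphaF N r n) * alphaF N r n = 2 := by
  simp only [betaF_eq, alphaF_eq, map_mul, Complex.conj_ofReal]
  linear_combination (sinWeight r (π * n / N) : ℂ) ^ 2 * conj_omegaN_zpow_mul_self (N := N) n +
    cosWeight_sq_add_sinWeight_sq r (π * n / N)

lemma conj_betaF_mul_add_conj_alphaF_mul_add_half (hNM : N = 2 * M) (hM : M ≠ 0) (r : ℕ) (n : ℤ) :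
    starRingEnd ℂ (betaF N r n) * betaF N r (n + M) +
      starRingEnd ℂ (alphaF N r n) * alphaF N r (n + M) = 0 := by
  rw [betaF_add_half hNM hM, alphaF_add_half hNM hM]
  simp only [betaF_eq, alphaF_eq, map_mul, Complex.conj_ofReal]
  linear_combination (-(cosWeight r (π * n / N) : ℂ) * sinWeight r (π * n / N)) *
    conj_omegaN_zpow_mul_self (N := N) n

lemma alphaF_mul_conj_add_half (hNM : N = 2 * M) (hM : M ≠ 0) (r : ℕ) (n : ℤ) :
    alphaF N r n * starRingEnd ℂ (alphaF N r n) +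
      alphaF N r (n + M) * starRingEnd ℂ (alphaF N r (n + M)) = 2 := by
  rw [alphaF_add_half hNM hM]
  simp only [alphaF_eq, map_mul, map_neg, Complex.conj_ofReal]
  linear_combination ((sinWeight r (π * n / N) : ℂ) ^ 2 + (cosWeight r (π * n / N) : ℂ) ^ 2) *
    conj_omegaN_zpow_mul_self (N := N) n + cosWeight_sq_add_sinWeight_sq r (π * n / N)

lemma alphaF_mul_conj_betaF_add_half (hNM : N = 2 * M) (hM : M ≠ 0) (r : ℕ) (n : ℤ) :
    alphaF N r n * starRingEnd ℂ (betaF N r n) +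
      alphaF N r (n + M) * starRingEnd ℂ (betaF N r (n + M)) = 0 := by
  rw [alphaF_add_half hNM hM, betaF_add_half hNM hM]
  simp only [alphaF_eq, betaF_eq, Complex.conj_ofReal]
  ring

lemma psi0_eq_idft (N r : ℕ) : psi0 N r = idft N (betaF N r) := rfl

lemma psi1_eq_idft (N r : ℕ) : psi1 N r = idft N (alphaF N r) := rfl

theorem stmt_1_general (j r : ℕ) (hj : 3 ≤ j) (N : ℕ) (hN : N = 2 ^ j) :
    (∀ l p : ℕ, l < N / 2 → p < N / 2 →
      ip N (fun k => psi1 N r (k - 2 * (l : ℤ))) (fun k => psi1 N r (k - 2 * (p : ℤ))) =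
        if l = p then 1 else 0) ∧
    (∀ l p : ℕ, l < N / 2 → p < N / 2 →
      ip N (fun k => psi1 N r (k - 2 * (l : ℤ))) (fun k => psi0 N r (k - 2 * (p : ℤ))) = 0) ∧
    (∀ x : ℤ → ℂ, (∀ k : ℤ, x (k + N) = x k) → ∀ k : ℤ,
      x k = ∑ l ∈ Finset.range (N / 2),
        (ip N x (fun t => psi0 N r (t - 2 * (l : ℤ))) * psi0 N r (k - 2 * (l : ℤ)) +
         ip N x (fun t => psi1 N r (t - 2 * (l : ℤ))) * psi1 N r (k - 2 * (l : ℤ)))) := by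
  obtain ⟨M, hNM, hM⟩ : ∃ M, N = 2 * M ∧ M ≠ 0 :=
    ⟨2 ^ (j - 1), by rw [hN, ← pow_succ']; congr 1; omega, by positivity⟩
  rw [show N / 2 = M by omega, psi0_eq_idft, psi1_eq_idft]
  refine ⟨fun l p hl hp => ?_, fun l p hl hp => ?_, fun x hx k => ?_⟩
  · simpa using ip_idft_sub_two_mul_eq_ite hNM (alphaF_mul_conj_add_half hNM hM r) hl hp
  · simpa using ip_idft_sub_two_mul_eq_ite hNM (alphaF_mul_conj_betaF_add_half hNM hM r) hl hp
  · exact (sum_ip_mul_idft_sub_two_mul hNM hM (conj_betaF_mul_add_conj_alphaF_mul N r)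
      (conj_betaF_mul_add_conj_alphaF_mul_add_half hNM hM r) hx k).symm

/-- The two-sample shifts of ψ₁ form an orthonormal system, each shift of ψ₁
is orthogonal to each shift of ψ₀, and the combined family is an orthonormal basis of Π[N]
(expressed via the reconstruction formula for every N-periodic signal). -/
theorem stmt_1 (j r : ℕ) (hj : 3 ≤ j) (hr : 1 ≤ r) (N : ℕ) (hN : N = 2 ^ j) :
    (∀ l p : ℕ, l < N / 2 → p < N / 2 →
      ip N (fun k => psi1 N r (k - 2 * (l : ℤ))) (fun k => psi1 N r (k - 2 * (p : ℤ))) =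
        if l = p then 1 else 0) ∧
    (∀ l p : ℕ, l < N / 2 → p < N / 2 →
      ip N (fun k => psi1 N r (k - 2 * (l : ℤ))) (fun k => psi0 N r (k - 2 * (p : ℤ))) = 0) ∧
    (∀ x : ℤ → ℂ, (∀ k : ℤ, x (k + N) = x k) → ∀ k : ℤ,
      x k = ∑ l ∈ Finset.range (N / 2),
        (ip N x (fun t => psi0 N r (t - 2 * (l : ℤ))) * psi0 N r (k - 2 * (l : ℤ)) +
         ip N x (fun t => psi1 N r (t - 2 * (l : ℤ))) * psi1 N r (k - 2 * (l : ℤ)))) :=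
  stmt_1_general j r hj N hN
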